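/- Let V̂ be an invertible n×n real matrix and let M̂ be the (n+1)×(n+1) real matrix given in block form by M̂ = [[1, 0ᵀ], [e, V̂]], where the top-left block is the 1×1 matrix with entry 1, the top-right block is the zero row, e is the column vector of all ones, and the bottom-right block is V̂. Then M̂ is invertible and ‖M̂⁻¹‖_∞ ≤ max(1, 2·‖V̂⁻¹‖_∞). -/

import Mathlib

open scoped RealInnerProductSpace
open Metric

noncomputable section

/-- Matrix–vector multiplication as a map on Euclidean space. -/
def mulVecE {n : ℕ} (H : Matrix (Fin n) (Fin n) ℝ) (v : EuclideanSpace ℝ (Fin n)) :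
    EuclideanSpace ℝ (Fin n) :=
  (EuclideanSpace.equiv (Fin n) ℝ).symm (H.mulVec (EuclideanSpace.equiv (Fin n) ℝ v))

/-- Operator 2-norm of a matrix (the norm induced by the Euclidean vector norm). -/
def opNorm {n : ℕ} (H : Matrix (Fin n) (Fin n) ℝ) : ℝ :=
  sSup {r : ℝ | ∃ v : EuclideanSpace ℝ (Fin n), ‖v‖ ≤ 1 ∧ r = ‖mulVecE H v‖}

/-- Quadratic model about `x` with data `(c, g, H)`. -/
def qm {n : ℕ} (x : EuclideanSpace ℝ (Fin n)) (c : ℝ) (g : EuclideanSpace ℝ (Fin n))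
    (H : Matrix (Fin n) (Fin n) ℝ) (y : EuclideanSpace ℝ (Fin n)) : ℝ :=
  c + ⟪g, y - x⟫ + (1 / 2) * ⟪y - x, mulVecE H (y - x)⟫

/-- `m` is a fully linear model for `f` on the closed ball `B(x, Δ)`. -/
def IsFullyLinear {n : ℕ} (f m : EuclideanSpace ℝ (Fin n) → ℝ)
    (x : EuclideanSpace ℝ (Fin n)) (Δ κmf κmg : ℝ) : Prop :=
  ∀ y ∈ closedBall x Δ,
    |m y - f y| ≤ κmf * Δ ^ 2 ∧ ‖gradient m y - gradient f y‖ ≤ κmg * Δ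

/-- `m` is a fully quadratic model for `f` on the closed ball `B(x, Δ)`. -/
def IsFullyQuadratic {n : ℕ} (f m : EuclideanSpace ℝ (Fin n) → ℝ)
    (x : EuclideanSpace ℝ (Fin n)) (Δ κmf κmg κmh : ℝ) : Prop :=
  ∀ y ∈ closedBall x Δ,
    |m y - f y| ≤ κmf * Δ ^ 3 ∧ ‖gradient m y - gradient f y‖ ≤ κmg * Δ ^ 2 ∧
      ‖fderiv ℝ (gradient m) y - fderiv ℝ (gradient f) y‖ ≤ κmh * Δ

/-- Smallest eigenvalue of a symmetric matrix: the minimum of `⟪u, H u⟫` over unit vectors. -/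
def lambdaMin {n : ℕ} (H : Matrix (Fin n) (Fin n) ℝ) : ℝ :=
  sInf {r : ℝ | ∃ u : EuclideanSpace ℝ (Fin n), ‖u‖ = 1 ∧ r = ⟪u, mulVecE H u⟫}

/-- `τ(H) = max(-λ_min(H), 0)`. -/
def tau {n : ℕ} (H : Matrix (Fin n) (Fin n) ℝ) : ℝ := max (-lambdaMin H) 0

/-- Hessian matrix of `f` at `x`. -/
def hessMat {n : ℕ} (f : EuclideanSpace ℝ (Fin n) → ℝ) (x : EuclideanSpace ℝ (Fin n)) :
    Matrix (Fin n) (Fin n) ℝ :=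
  Matrix.of fun i j => fderiv ℝ (gradient f) x (EuclideanSpace.single j 1) i

/-- ℓ∞ operator norm of a matrix: the maximum absolute row sum. -/
def linftyNorm {m k : Type*} [Fintype m] [Fintype k] (A : Matrix m k ℝ) : ℝ :=
  sSup (Set.range fun i => ∑ j, |A i j|)

/-! `M̂` is lower block-triangular with a unit corner, so `M̂⁻¹ = [[1, 0], [-V̂⁻¹e, V̂⁻¹]]`.
The ℓ∞ norm of a block matrix is at most the larger of the norms of its two block rows; the
first block row of `M̂⁻¹` has norm at most `1`, the second at most
`‖V̂⁻¹‖ ‖e‖ + ‖V̂⁻¹‖ ≤ 2 ‖V̂⁻¹‖` by submultiplicativity of the ℓ∞ operator norm. -/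

section LinftyNorm

open Matrix

attribute [local instance] Matrix.linftyOpNormedAddCommGroup

variable {l m m' k k' : Type*} [Fintype l] [Fintype m] [Fintype m'] [Fintype k] [Fintype k']

theorem linftyNorm_eq_norm (A : Matrix m k ℝ) : linftyNorm A = ‖A‖ := by
  rw [linfty_opNorm_def, Finset.sup_univ_eq_ciSup, NNReal.coe_iSup]
  simp [linftyNorm, iSup]

theorem linftyNorm_nonneg (A : Matrix m k ℝ) : 0 ≤ linftyNorm A :=
  linftyNorm_eq_norm A ▸ norm_nonneg A

@[simp]
theorem linftyNorm_zero : linftyNorm (0 : Matrix m k ℝ) = 0 := by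
  rw [linftyNorm_eq_norm, norm_zero]

@[simp]
theorem linftyNorm_neg (A : Matrix m k ℝ) : linftyNorm (-A) = linftyNorm A := by
  rw [linftyNorm_eq_norm, linftyNorm_eq_norm, norm_neg]

theorem linftyNorm_one_le [DecidableEq m] : linftyNorm (1 : Matrix m m ℝ) ≤ 1 := by
  rw [linftyNorm_eq_norm, ← diagonal_one, linfty_opNorm_diagonal]
  exact (pi_norm_const_le (1 : ℝ)).trans norm_one.le

theorem linftyNorm_mul_le (A : Matrix l m ℝ) (B : Matrix m k ℝ) :
    linftyNorm (A * B) ≤ linftyNorm A * linftyNorm B := by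
  simp only [linftyNorm_eq_norm]
  exact linfty_opNorm_mul A B

theorem sum_abs_le_linftyNorm (A : Matrix m k ℝ) (i : m) : ∑ j, |A i j| ≤ linftyNorm A :=
  le_csSup (Set.finite_range _).bddAbove ⟨i, rfl⟩

theorem linftyNorm_le_of_forall_sum_abs_le {A : Matrix m k ℝ} {r : ℝ} (hr : 0 ≤ r)
    (hA : ∀ i, ∑ j, |A i j| ≤ r) : linftyNorm A ≤ r :=
  Real.sSup_le (Set.forall_mem_range.2 hA) hr

theorem linftyNorm_col_one_le_one [Unique k] :
    linftyNorm (of fun (_ : m) (_ : k) => (1 : ℝ)) ≤ 1 :=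
  linftyNorm_le_of_forall_sum_abs_le zero_le_one fun _ => by simp

theorem linftyNorm_fromBlocks_le (A : Matrix m k ℝ) (B : Matrix m k' ℝ) (C : Matrix m' k ℝ)
    (D : Matrix m' k' ℝ) :
    linftyNorm (fromBlocks A B C D) ≤
      max (linftyNorm A + linftyNorm B) (linftyNorm C + linftyNorm D) := by
  refine linftyNorm_le_of_forall_sum_abs_le
    (le_max_of_le_left (add_nonneg (linftyNorm_nonneg A) (linftyNorm_nonneg B))) ?_
  rintro (i | i) <;> simp only [Fintype.sum_sum_type, fromBlocks_apply₁₁, fromBlocks_apply₁₂,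
    fromBlocks_apply₂₁, fromBlocks_apply₂₂]
  · exact le_max_of_le_left (add_le_add (sum_abs_le_linftyNorm A i) (sum_abs_le_linftyNorm B i))
  · exact le_max_of_le_right (add_le_add (sum_abs_le_linftyNorm C i) (sum_abs_le_linftyNorm D i))

theorem linftyNorm_inv_fromBlocks_one_zero_le [DecidableEq m] [DecidableEq k]
    (C : Matrix k m ℝ) (D : Matrix k k ℝ) (hD : IsUnit D.det) :
    linftyNorm (fromBlocks (1 : Matrix m m ℝ) 0 C D)⁻¹ ≤
      max 1 (linftyNorm D⁻¹ * (linftyNorm C + 1)) := by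
  have hD' : IsUnit D := (isUnit_iff_isUnit_det D).2 hD
  rw [inv_fromBlocks_zero₁₂_of_isUnit_iff _ _ _ (iff_of_true isUnit_one hD'), inv_one,
    Matrix.mul_one]
  refine (linftyNorm_fromBlocks_le _ _ _ _).trans ?_
  rw [linftyNorm_zero, add_zero, linftyNorm_neg, mul_add_one]
  gcongr
  · exact linftyNorm_one_le
  · exact linftyNorm_mul_le D⁻¹ C

end LinftyNorm

/-- For the block interpolation matrix `M̂ = [[1, 0ᵀ], [e, V̂]]` with `V̂` invertible,
`M̂` is invertible and `‖M̂⁻¹‖_∞ ≤ max(1, 2‖V̂⁻¹‖_∞)` (Lemma `lem_linear_sample_estimate`). -/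
theorem block_interp_matrix_inv_linfty_bound {n : ℕ}
    (Vhat : Matrix (Fin n) (Fin n) ℝ) (hV : IsUnit Vhat.det)
    (Mhat : Matrix (Unit ⊕ Fin n) (Unit ⊕ Fin n) ℝ)
    (hM : Mhat = Matrix.fromBlocks (Matrix.of fun _ _ => (1 : ℝ)) 0
      (Matrix.of fun _ _ => (1 : ℝ)) Vhat) :
    IsUnit Mhat.det ∧ linftyNorm Mhat⁻¹ ≤ max 1 (2 * linftyNorm Vhat⁻¹) := by
  have hone : (Matrix.of fun _ _ => (1 : ℝ) : Matrix Unit Unit ℝ) = 1 := by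
    ext; simp
  rw [hone] at hM
  subst hM
  refine ⟨by rwa [Matrix.det_fromBlocks_zero₁₂, Matrix.det_one, one_mul], ?_⟩
  refine (linftyNorm_inv_fromBlocks_one_zero_le _ Vhat hV).trans ?_
  rw [mul_comm 2]
  gcongr
  · exact linftyNorm_nonneg _
  · linarith [linftyNorm_col_one_le_one (m := Fin n) (k := Unit)]
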